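/- arXiv:0810.1485 — 2 statements merged into one kernel-verified Lean document; each statement's English description precedes it below -/
import Mathlib

section
/- Let A, B ⊆ ℝ^d be finite sets with |B| = d+1. Assume that B is proper d-dimensional and that A is contained in the convex hull of B. Put A_1 = A ∩ B and A_2 = A \ B, and let k be a positive integer. Then the sets A_1 + kB and A_2 + kB are disjoint, and the translates a + kB for a ∈ A_2 are pairwise disjoint; consequently |A + kB| = |A_1 + kB| + |A_2|·C(d+k, k). -/
open Pointwise

/-- The `k`-fold sumset `B + B + ⋯ + B` (`k` summands). -/
def kfoldSumset {α : Type*} [AddCommMonoid α] [DecidableEq α]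
    (k : ℕ) (B : Finset α) : Finset α :=
  ∑ _i ∈ Finset.range k, B

/-!
Points of `conv B` have barycentric weights in `[0, 1]` summing to `1`, and points of `kB` have
weights in `ℕ` summing to `k`; since `B` is affinely independent, `a + y` determines the sum of
the weights of `a` and of `y`. Suppose `a + y = a' + y'` with `a, a' ∈ conv B` and `a' ∉ B`.
Every weight of `a'` is then `< 1`, so each difference `w_b(a) - w_b(a')` is an integer `> -1`,
hence `≥ 0`; since these differences sum to `0`, they vanish and `a = a'`. This gives both
disjointness statements as well as the injectivity of `(a, y) ↦ a + y` on `(A \ B) × kB`, and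
`kB` is in bijection with the weight vectors in `ℕ^B` of sum `k`, of which there are
`C(|B| + k - 1, k)`.
-/

open Finset Finsupp

section AddCommMonoid

variable {α : Type*} [AddCommMonoid α] [DecidableEq α]

theorem kfoldSumset_succ (k : ℕ) (B : Finset α) :
    kfoldSumset (k + 1) B = kfoldSumset k B + B :=
  sum_range_succ _ _

theorem sum_and_sum_smul_add_single_one {B : Finset α} {b : α} (hb : b ∈ B) (n : α →₀ ℕ) :
    ∑ c ∈ B, (n + Finsupp.single b 1 : α →₀ ℕ) c = ∑ c ∈ B, n c + 1 ∧
      ∑ c ∈ B, (n + Finsupp.single b 1 : α →₀ ℕ) c • c = ∑ c ∈ B, n c • c + b := by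
  simp [sum_add_distrib, add_smul, Finsupp.single_apply, hb]

theorem kfoldSumset_eq_image_finsuppAntidiag (k : ℕ) (B : Finset α) :
    kfoldSumset k B = (B.finsuppAntidiag k).image fun n => ∑ b ∈ B, n b • b := by
  induction k with
  | zero => simp [kfoldSumset, ← singleton_zero]
  | succ k ih =>
    rw [kfoldSumset_succ, ih]
    ext x
    simp only [mem_add, mem_image, mem_finsuppAntidiag]
    constructor
    · rintro ⟨_, ⟨n, ⟨hnk, hnB⟩, rfl⟩, b, hb, rfl⟩
      obtain ⟨hsum, hsmul⟩ := sum_and_sum_smul_add_single_one hb n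
      refine ⟨n + Finsupp.single b 1, ⟨by rw [hsum, hnk], ?_⟩, hsmul⟩
      exact support_add.trans (union_subset hnB (by simpa using hb))
    · rintro ⟨n, ⟨hnk, hnB⟩, rfl⟩
      obtain ⟨b, hb, hnb⟩ : ∃ b ∈ B, n b ≠ 0 :=
        exists_ne_zero_of_sum_ne_zero (by rw [hnk]; omega)
      have hn : n - Finsupp.single b 1 + Finsupp.single b 1 = n :=
        tsub_add_cancel_of_le (single_le_iff.2 (Nat.one_le_iff_ne_zero.2 hnb))
      obtain ⟨hsum, hsmul⟩ := sum_and_sum_smul_add_single_one hb (n - Finsupp.single b 1)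
      rw [hn] at hsum hsmul
      exact ⟨_, ⟨n - Finsupp.single b 1, ⟨Nat.add_right_cancel (hsum.symm.trans hnk),
        support_tsub.trans hnB⟩, rfl⟩, b, hb, hsmul.symm⟩

end AddCommMonoid

theorem exists_natCast_weights_of_mem_kfoldSumset {R V : Type*} [Semiring R] [AddCommMonoid V]
    [Module R V] [DecidableEq V] {B : Finset V} {k : ℕ} {y : V}
    (hy : y ∈ kfoldSumset k B) :
    ∃ n : V →₀ ℕ, ∑ b ∈ B, (n b : R) = k ∧ ∑ b ∈ B, (n b : R) • b = y := by
  rw [kfoldSumset_eq_image_finsuppAntidiag, mem_image] at hy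
  obtain ⟨n, hn, rfl⟩ := hy
  exact ⟨n, by rw [← Nat.cast_sum, (mem_finsuppAntidiag.1 hn).1],
    by simp [Nat.cast_smul_eq_nsmul]⟩

theorem card_kfoldSumset {R V : Type*} [Ring R] [CharZero R] [AddCommGroup V] [Module R V]
    [DecidableEq V] {B : Finset V} (hB : AffineIndependent R ((↑) : B → V)) (k : ℕ) :
    #(kfoldSumset k B) = (#B + k - 1).choose k := by
  rw [kfoldSumset_eq_image_finsuppAntidiag, card_image_of_injOn,
    card_finsuppAntidiag_nat_eq_choose]
  intro n hn n' hn' h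
  simp only [mem_coe, mem_finsuppAntidiag] at hn hn'
  have hcoord := hB.eq_of_sum_eq_sum_subtype (w₁ := fun b => (n b : R))
    (w₂ := fun b => (n' b : R)) (by simp only [← Nat.cast_sum]; rw [hn.1, hn'.1])
    (by simpa [Nat.cast_smul_eq_nsmul] using h)
  ext b
  by_cases hb : b ∈ B
  · exact_mod_cast hcoord b hb
  · rw [notMem_support_iff.1 fun h => hb (hn.2 h), notMem_support_iff.1 fun h => hb (hn'.2 h)]

theorem affineIndependent_of_card_eq_finrank_add_one {K V : Type*} [Field K] [AddCommGroup V]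
    [Module K V] [FiniteDimensional K V] {B : Finset V} (hcard : #B = Module.finrank K V + 1)
    (hspan : affineSpan K (B : Set V) = ⊤) : AffineIndependent K ((↑) : B → V) := by
  rw [affineIndependent_iff_finrank_vectorSpan_eq K _ (by simpa using hcard),
    Subtype.range_coe_subtype, Finset.setOfPred_mem, ← direction_affineSpan, hspan,
    AffineSubspace.direction_top, finrank_top]

section LinearOrderedField

variable {𝕜 V : Type*} [Field 𝕜] [LinearOrder 𝕜] [IsStrictOrderedRing 𝕜]
  [AddCommGroup V] [Module 𝕜 V] [DecidableEq V] {A B : Finset V} {k : ℕ}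

theorem lt_one_of_sum_smul_notMem {w : V → 𝕜} (hw₀ : ∀ b ∈ B, 0 ≤ w b)
    (hw₁ : ∑ b ∈ B, w b = 1) (hnot : ∑ b ∈ B, w b • b ∉ B) : ∀ b ∈ B, w b < 1 := by
  intro b hb
  by_contra! hge
  have hrest_nonneg : ∀ c ∈ B.erase b, 0 ≤ w c := fun c hc => hw₀ c (mem_of_mem_erase hc)
  have hrest_sum : ∑ c ∈ B.erase b, w c = 0 :=
    le_antisymm (by linarith [add_sum_erase B w hb]) (sum_nonneg hrest_nonneg)
  have hrest : ∀ c ∈ B, c ≠ b → w c = 0 := fun c hc hcb =>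
    (sum_eq_zero_iff_of_nonneg hrest_nonneg).1 hrest_sum c (mem_erase.2 ⟨hcb, hc⟩)
  have hb₁ : w b = 1 := by rwa [sum_eq_single_of_mem b hb hrest] at hw₁
  apply hnot
  rwa [sum_eq_single_of_mem b hb fun c hc hcb => by rw [hrest c hc hcb, zero_smul], hb₁,
    one_smul]

theorem eq_of_add_eq_add_of_mem_kfoldSumset (hB : AffineIndependent 𝕜 ((↑) : B → V))
    {a a' y y' : V} (ha : a ∈ convexHull 𝕜 (B : Set V)) (ha' : a' ∈ convexHull 𝕜 (B : Set V))
    (ha'B : a' ∉ B) (hy : y ∈ kfoldSumset k B) (hy' : y' ∈ kfoldSumset k B)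
    (h : a + y = a' + y') : a = a' := by
  obtain ⟨w, hw₀, hw₁, rfl⟩ := mem_convexHull'.1 ha
  obtain ⟨w', hw₀', hw₁', rfl⟩ := mem_convexHull'.1 ha'
  obtain ⟨n, hn, rfl⟩ := exists_natCast_weights_of_mem_kfoldSumset (R := 𝕜) hy
  obtain ⟨n', hn', rfl⟩ := exists_natCast_weights_of_mem_kfoldSumset (R := 𝕜) hy'
  have hlt := lt_one_of_sum_smul_notMem hw₀' hw₁' ha'B
  have hcoord := hB.eq_of_sum_eq_sum_subtype (w₁ := fun b => w b + n b)
    (w₂ := fun b => w' b + n' b) (by simp only [sum_add_distrib, hw₁, hw₁', hn, hn'])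
    (by simpa only [add_smul, sum_add_distrib] using h)
  have hdiff_nonneg : ∀ b ∈ B, 0 ≤ w b - w' b := by
    intro b hb
    have hz : w b - w' b = ((n' b - n b : ℤ) : 𝕜) := by
      push_cast; linarith [hcoord b hb]
    have hgt : ((-1 : ℤ) : 𝕜) < ((n' b - n b : ℤ) : 𝕜) := by
      rw [← hz]; push_cast; linarith [hw₀ b hb, hlt b hb]
    have hgt' : (-1 : ℤ) < n' b - n b := by exact_mod_cast hgt
    rw [hz]
    exact_mod_cast (by omega : (0 : ℤ) ≤ n' b - n b)
  have hdiff_zero := (sum_eq_zero_iff_of_nonneg hdiff_nonneg).1 (by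
    rw [sum_sub_distrib, hw₁, hw₁', sub_self])
  exact sum_congr rfl fun b hb => by rw [sub_eq_zero.1 (hdiff_zero b hb)]

theorem disjoint_inter_add_kfoldSumset_sdiff_add_kfoldSumset
    (hB : AffineIndependent 𝕜 ((↑) : B → V)) (hA : (A : Set V) ⊆ convexHull 𝕜 (B : Set V)) :
    Disjoint ((A ∩ B) + kfoldSumset k B) ((A \ B) + kfoldSumset k B) := by
  rw [disjoint_left]
  intro _ hx hx'
  obtain ⟨a, ha, y, hy, rfl⟩ := mem_add.1 hx
  obtain ⟨a', ha', y', hy', h⟩ := mem_add.1 hx'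
  rw [mem_inter] at ha
  rw [mem_sdiff] at ha'
  have haa' := eq_of_add_eq_add_of_mem_kfoldSumset hB (subset_convexHull 𝕜 _ ha.2) (hA ha'.1)
    ha'.2 hy hy' h.symm
  exact ha'.2 (haa' ▸ ha.2)

theorem pairwise_disjoint_singleton_add_kfoldSumset
    (hB : AffineIndependent 𝕜 ((↑) : B → V)) (hA : (A : Set V) ⊆ convexHull 𝕜 (B : Set V)) :
    ((A \ B : Finset V) : Set V).Pairwise
      fun a a' => Disjoint ({a} + kfoldSumset k B) ({a'} + kfoldSumset k B) := by
  intro a ha a' ha' hne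
  rw [mem_coe, mem_sdiff] at ha ha'
  simp only [singleton_add, disjoint_left, mem_vadd_finset, vadd_eq_add]
  rintro _ ⟨y, hy, rfl⟩ ⟨y', hy', h⟩
  exact hne (eq_of_add_eq_add_of_mem_kfoldSumset hB (hA ha'.1) (hA ha.1) ha.2 hy' hy h).symm

theorem card_add_kfoldSumset
    (hB : AffineIndependent 𝕜 ((↑) : B → V)) (hA : (A : Set V) ⊆ convexHull 𝕜 (B : Set V)) :
    #(A + kfoldSumset k B) = #((A ∩ B) + kfoldSumset k B) + #(A \ B) * (#B + k - 1).choose k := by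
  have hinj : ((A \ B : Finset V) ×ˢ (kfoldSumset k B : Finset V) : Set (V × V)).InjOn
      fun p => p.1 + p.2 := by
    rintro ⟨a, y⟩ hay ⟨a', y'⟩ hay' h
    simp only [Set.mem_prod, mem_coe, mem_sdiff] at hay hay'
    obtain rfl := eq_of_add_eq_add_of_mem_kfoldSumset hB (hA hay.1.1) (hA hay'.1.1) hay'.1.2
      hay.2 hay'.2 h
    simpa using h
  rw [← card_kfoldSumset hB, ← card_add_iff.2 hinj, ← card_union_of_disjoint
    (disjoint_inter_add_kfoldSumset_sdiff_add_kfoldSumset hB hA), ← union_add,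
    union_comm, sdiff_union_inter]

end LinearOrderedField

theorem simplex_case_disjoint_decomposition_general (d k : ℕ)
    (A B : Finset (Fin d → ℝ)) (hB : B.card = d + 1)
    (hBspan : affineSpan ℝ (B : Set (Fin d → ℝ)) = ⊤)
    (hAB : (A : Set (Fin d → ℝ)) ⊆ convexHull ℝ (B : Set (Fin d → ℝ))) :
    Disjoint ((A ∩ B) + kfoldSumset k B) ((A \ B) + kfoldSumset k B) ∧
    ((A \ B : Finset (Fin d → ℝ)) : Set (Fin d → ℝ)).Pairwise
      (fun a a' => Disjoint ({a} + kfoldSumset k B) ({a'} + kfoldSumset k B)) ∧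
    (A + kfoldSumset k B).card
      = ((A ∩ B) + kfoldSumset k B).card + (A \ B).card * (d + k).choose k := by
  have hBind : AffineIndependent ℝ ((↑) : B → Fin d → ℝ) :=
    affineIndependent_of_card_eq_finrank_add_one (by simpa using hB) hBspan
  refine ⟨disjoint_inter_add_kfoldSumset_sdiff_add_kfoldSumset hBind hAB,
    pairwise_disjoint_singleton_add_kfoldSumset hBind hAB, ?_⟩
  rw [card_add_kfoldSumset hBind hAB, hB, Nat.add_right_comm, Nat.add_sub_cancel]

theorem simplex_case_disjoint_decomposition (d k : ℕ) (hk : 0 < k)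
    (A B : Finset (Fin d → ℝ)) (hB : B.card = d + 1)
    (hBspan : affineSpan ℝ (B : Set (Fin d → ℝ)) = ⊤)
    (hAB : (A : Set (Fin d → ℝ)) ⊆ convexHull ℝ (B : Set (Fin d → ℝ))) :
    Disjoint ((A ∩ B) + kfoldSumset k B) ((A \ B) + kfoldSumset k B) ∧
    ((A \ B : Finset (Fin d → ℝ)) : Set (Fin d → ℝ)).Pairwise
      (fun a a' => Disjoint ({a} + kfoldSumset k B) ({a'} + kfoldSumset k B)) ∧
    (A + kfoldSumset k B).card
      = ((A ∩ B) + kfoldSumset k B).card + (A \ B).card * (d + k).choose k :=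
  simplex_case_disjoint_decomposition_general d k A B hB hBspan hAB
end

section
/- Let B ⊆ ℝ^d with |B| = d+1 be proper d-dimensional, let k be a positive integer, and let A_1 ⊆ B be a subset with |A_1| = m_1. Then |A_1 + kB| = C(d+k+1, k+1) − C(d − m_1 + k + 1, k+1). -/
/-!
An element of `A + kB` is the sum of a multiset of `k + 1` points of `B` containing at least one
point of `A`, and conversely. When `B` is affinely independent, the multiplicities of such a
multiset are recovered from its sum, since they are weights of fixed total `k + 1`. Hence
`|A + kB|` is the number of `(k + 1)`-multisets on `B` minus those on `B \ A`, i.e.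
`C(d + k + 1, k + 1) - C(d + k + 1 - |A|, k + 1)` by stars and bars.
-/

open Pointwise

open Finset

theorem Finset.card_sym {α : Type*} [DecidableEq α] (s : Finset α) (n : ℕ) :
    #(s.sym n) = (#s + n - 1).choose n := by
  have himg : s.sym n = univ.image (Sym.map ((↑) : s → α)) := by
    ext m
    simp only [mem_sym_iff, mem_image, mem_univ, true_and]
    constructor
    · intro hm
      refine ⟨m.attach.map fun x => ⟨x.1, hm x.1 x.2⟩, ?_⟩
      rw [Sym.map_map]
      exact Sym.attach_map_coe m
    · rintro ⟨m', rfl⟩ a ha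
      obtain ⟨b, -, rfl⟩ := Sym.mem_map.1 ha
      exact b.2
  rw [himg, card_image_of_injective _ (Sym.map_injective Subtype.coe_injective n), card_univ,
    Sym.card_sym_eq_choose, Fintype.card_coe]

section Sumset

variable {α : Type*} [AddCommMonoid α] [DecidableEq α]

theorem kfoldSumset_eq_image_sym (B : Finset α) (k : ℕ) :
    kfoldSumset k B = (B.sym k).image fun s : Sym α k => (s : Multiset α).sum := by
  induction k with
  | zero => rfl
  | succ k ih =>
    rw [kfoldSumset, sum_range_succ, ← kfoldSumset, ih, Finset.sym_succ]
    ext x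
    simp only [mem_add, mem_image, mem_sup, exists_exists_and_eq_and]
    constructor
    · rintro ⟨t, ht, a, ha, rfl⟩
      exact ⟨a ::ₛ t, ⟨a, ha, t, ht, rfl⟩, by rw [Sym.coe_cons, Multiset.sum_cons, add_comm]⟩
    · rintro ⟨_, ⟨a, ha, t, ht, rfl⟩, rfl⟩
      exact ⟨t, ht, a, ha, by rw [Sym.coe_cons, Multiset.sum_cons, add_comm]⟩

theorem add_kfoldSumset_eq_image_sym_sdiff {A B : Finset α} (hA : A ⊆ B) (k : ℕ) :
    A + kfoldSumset k B =
      (B.sym (k + 1) \ (B \ A).sym (k + 1)).image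
        fun s : Sym α (k + 1) => (s : Multiset α).sum := by
  rw [kfoldSumset_eq_image_sym]
  ext x
  simp only [mem_add, mem_image, mem_sdiff, exists_exists_and_eq_and]
  constructor
  · rintro ⟨a, ha, t, ht, rfl⟩
    refine ⟨a ::ₛ t,
      ⟨?_, fun h => (mem_sdiff.1 (mem_sym_iff.1 h a (Sym.mem_cons_self a t))).2 ha⟩,
      by rw [Sym.coe_cons, Multiset.sum_cons]⟩
    rw [mem_sym_iff] at ht ⊢
    intro b hb
    rcases Sym.mem_cons.1 hb with rfl | hb
    exacts [hA ha, ht b hb]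
  · rintro ⟨s, ⟨hs, hsA⟩, rfl⟩
    rw [mem_sym_iff] at hs hsA
    obtain ⟨a, has, haA⟩ := not_forall₂.1 hsA
    refine ⟨a, by simpa [hs a has] using haA, s.erase a has, ?_, ?_⟩
    · exact mem_sym_iff.2 fun b hb => hs b (Multiset.mem_of_mem_erase hb)
    · rw [← Multiset.sum_cons, ← Sym.coe_cons, Sym.cons_erase]

end Sumset

theorem AffineIndependent.injOn_sum_sym {k V : Type*} [Ring k] [CharZero k] [AddCommGroup V]
    [Module k V] [DecidableEq V] {B : Finset V} (hB : AffineIndependent k ((↑) : B → V))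
    (n : ℕ) : Set.InjOn (fun s : Sym V n => (s : Multiset V).sum) (B.sym n) := by
  intro s hs t ht hst
  have weights : ∀ u ∈ B.sym n, ∑ b ∈ B, ((u : Multiset V).count b : k) = n ∧
      ∑ b ∈ B, ((u : Multiset V).count b : k) • b = (u : Multiset V).sum := by
    intro u hu
    have huB : ∀ b ∈ (u : Multiset V), b ∈ B := mem_sym_iff.1 hu
    constructor
    · rw [← Nat.cast_sum, Multiset.sum_count_eq_card huB, Sym.card_coe]
    · rw [sum_multiset_count_of_subset _ B fun b hb => huB b (Multiset.mem_toFinset.1 hb)]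
      simp only [Nat.cast_smul_eq_nsmul]
  obtain ⟨hs₁, hs₂⟩ := weights s hs
  obtain ⟨ht₁, ht₂⟩ := weights t ht
  have hcount := hB.eq_of_sum_eq_sum_subtype (hs₁.trans ht₁.symm) (hs₂.trans (hst.trans ht₂.symm))
  refine Sym.coe_injective (Multiset.ext.2 fun b => ?_)
  by_cases hb : b ∈ B
  · exact_mod_cast hcount b hb
  · exact (Multiset.count_eq_zero_of_notMem fun h => hb (mem_sym_iff.1 hs b h)).trans
      (Multiset.count_eq_zero_of_notMem fun h => hb (mem_sym_iff.1 ht b h)).symm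

theorem affineIndependent_of_affineSpan_eq_top_of_card_eq_finrank_add_one {k V : Type*}
    [DivisionRing k] [AddCommGroup V] [Module k V] [FiniteDimensional k V] {s : Finset V}
    (hcard : #s = Module.finrank k V + 1) (hspan : affineSpan k (s : Set V) = ⊤) :
    AffineIndependent k ((↑) : s → V) := by
  have hrange : Set.range ((↑) : s → V) = s := Subtype.range_coe
  rw [affineIndependent_iff_finrank_vectorSpan_eq k _ (by rwa [Fintype.card_coe]), hrange,
    ← direction_affineSpan, hspan, AffineSubspace.direction_top, finrank_top]

theorem subset_of_simplex_vertices_sumset_card_general (d k m₁ : ℕ)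
    (B A₁ : Finset (Fin d → ℝ)) (hB : B.card = d + 1)
    (hBspan : affineSpan ℝ (B : Set (Fin d → ℝ)) = ⊤)
    (hA₁ : A₁ ⊆ B) (hm₁ : A₁.card = m₁) :
    ((A₁ + kfoldSumset k B).card : ℤ)
      = (d + k + 1).choose (k + 1) - ((d + k + 1 - m₁).choose (k + 1)) := by
  have hind : AffineIndependent ℝ ((↑) : B → Fin d → ℝ) :=
    affineIndependent_of_affineSpan_eq_top_of_card_eq_finrank_add_one
      (by rw [hB, Module.finrank_fin_fun]) hBspan
  have hsub : (B \ A₁).sym (k + 1) ⊆ B.sym (k + 1) := sym_mono sdiff_subset _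
  have hm₁_le : m₁ ≤ d + 1 := hm₁ ▸ hB ▸ card_le_card hA₁
  rw [add_kfoldSumset_eq_image_sym_sdiff hA₁,
    card_image_of_injOn ((hind.injOn_sum_sym _).mono sdiff_subset), card_sdiff_of_subset hsub,
    Nat.cast_sub (card_le_card hsub), card_sym, card_sym, card_sdiff_of_subset hA₁, hB, hm₁,
    show d + 1 + (k + 1) - 1 = d + k + 1 by omega,
    show d + 1 - m₁ + (k + 1) - 1 = d + k + 1 - m₁ by omega]

theorem subset_of_simplex_vertices_sumset_card (d k m₁ : ℕ) (hk : 0 < k)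
    (B A₁ : Finset (Fin d → ℝ)) (hB : B.card = d + 1)
    (hBspan : affineSpan ℝ (B : Set (Fin d → ℝ)) = ⊤)
    (hA₁ : A₁ ⊆ B) (hm₁ : A₁.card = m₁) :
    ((A₁ + kfoldSumset k B).card : ℤ)
      = (d + k + 1).choose (k + 1) - ((d + k + 1 - m₁).choose (k + 1)) :=
  subset_of_simplex_vertices_sumset_card_general d k m₁ B A₁ hB hBspan hA₁ hm₁
end
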